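/- arXiv:0801.3714 — 2 statements merged into one kernel-verified Lean document; each statement's English description precedes it below -/
import Mathlib

section
/- If G is a bridgeless cubic graph, then for every edge e of G there is a perfect matching F of G with e ∉ F. -/
/-! Multigraphs: vertex type `V`, edge type `E`, incidence map `ends : E → Sym2 V`. -/

namespace Mg

variable {V E : Type}

/-- No loops: no edge has equal endpoints. -/
def NoLoops (ends : E → Sym2 V) : Prop := ∀ e, ¬ (ends e).IsDiag

/-- Cubic: every vertex is incident with exactly three edges. -/
def IsCubic (ends : E → Sym2 V) : Prop := ∀ v, {e | v ∈ ends e}.ncard = 3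

/-- Reachability using only edges in `F`. -/
def Reach (ends : E → Sym2 V) (F : Set E) : V → V → Prop :=
  Relation.ReflTransGen (fun a b => ∃ e ∈ F, ends e = s(a, b))

/-- Connected. -/
def Connected (ends : E → Sym2 V) : Prop := ∀ v w, Reach ends Set.univ v w

/-- Bridgeless: the endpoints of each edge remain joined after its removal. -/
def Bridgeless (ends : E → Sym2 V) : Prop :=
  ∀ e v w, ends e = s(v, w) → Reach ends {f | f ≠ e} v w

/-- A 2-factor: every vertex is incident with exactly two edges of `F`. -/
def IsTwoFactor (ends : E → Sym2 V) (F : Set E) : Prop :=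
  ∀ v, {e | e ∈ F ∧ v ∈ ends e}.ncard = 2

/-- The component of `v` in the spanning subgraph with edge set `F`. -/
def component (ends : E → Sym2 V) (F : Set E) (v : V) : Set V := {w | Reach ends F v w}

/-- Every 2-factor consists only of 5-cycles: each component of any 2-factor
has exactly five vertices. -/
def TwoFactorsAllC5 (ends : E → Sym2 V) : Prop :=
  ∀ F : Set E, IsTwoFactor ends F → ∀ v, (component ends F v).ncard = 5

/-- A perfect matching: every vertex is incident with exactly one edge of `M`. -/
def IsPerfectMatching (ends : E → Sym2 V) (M : Set E) : Prop :=
  ∀ v, ∃! e, e ∈ M ∧ v ∈ ends e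

/-- A cycle of length `n`: `n` distinct vertices and `n` distinct edges, cyclically. -/
def HasCycle (ends : E → Sym2 V) (n : ℕ) : Prop :=
  ∃ (c : ZMod n → V) (f : ZMod n → E), Function.Injective c ∧ Function.Injective f ∧
    ∀ i, ends (f i) = s(c i, c (i + 1))

end Mg

/-! Delete `e` and apply Tutte's theorem: it suffices that, for every vertex set `u`, the graph
`G - e - u` has at most `|u|` odd components. In a loopless cubic graph
`3 |S| = |∂S| + 2 · #(edges inside S)`, so an odd vertex set `S` has an odd boundary `∂S`, and
`|∂S| ≠ 1` because `G` is bridgeless; hence `|∂S| ≥ 3`. Every boundary edge of an odd component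
of `G - e - u` other than `e` ends in `u`, different components use different such edges, and `e`
lies on at most two boundaries. So `3k - 2 ≤ 3 |u|` for `k` odd components, i.e. `k ≤ |u|`. -/

open Finset Function

namespace Mg

variable {V E : Type}

open SimpleGraph in
lemma exists_isPerfectMatching_of_fromEdgeSet {ends : E → Sym2 V} {F : Set E}
    {M : (fromEdgeSet (ends '' F)).Subgraph} (hM : M.IsPerfectMatching) :
    ∃ N ⊆ F, IsPerfectMatching ends N := by
  have hlift : ∀ p : M.edgeSet, ∃ f ∈ F, ends f = p := fun p => by
    have := M.edgeSet_subset p.2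
    rw [edgeSet_fromEdgeSet] at this
    exact this.1
  choose σ hσF hσ using hlift
  refine ⟨Set.range σ, Set.range_subset_iff.2 hσF, fun v => ?_⟩
  obtain ⟨w, hvw, huniq⟩ := M.isPerfectMatching_iff.1 hM v
  refine ⟨σ ⟨s(v, w), hvw⟩, ⟨⟨_, rfl⟩, by simp [hσ]⟩, ?_⟩
  rintro _ ⟨⟨⟨p, hp⟩, rfl⟩, hv⟩
  rw [hσ] at hv
  obtain ⟨x, rfl⟩ := Sym2.mem_iff_exists.1 hv
  obtain rfl := huniq x hp
  rfl

variable [Fintype E]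

open Classical in
noncomputable def cut (ends : E → Sym2 V) (S : Set V) : Finset E :=
  {f | ∃ a ∈ S, ∃ b ∉ S, ends f = s(a, b)}

open Classical in
noncomputable def degree (ends : E → Sym2 V) (v : V) : ℕ := #{f | v ∈ ends f}

variable {ends : E → Sym2 V}

lemma mem_cut {S : Set V} {f : E} : f ∈ cut ends S ↔ ∃ a ∈ S, ∃ b ∉ S, ends f = s(a, b) := by
  classical
  simp [cut]

lemma mem_cut_iff {S : Set V} {f : E} {a b : V} (hf : ends f = s(a, b)) :
    f ∈ cut ends S ↔ (a ∈ S ∧ b ∉ S ∨ b ∈ S ∧ a ∉ S) := by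
  simp only [mem_cut, hf, Sym2.eq_iff]
  grind

lemma degree_eq_of_isCubic (hc : IsCubic ends) (v : V) : degree ends v = 3 := by
  classical
  rw [← hc v, Set.ncard_eq_toFinset_card', degree]
  congr 1; ext; simp

lemma mem_of_reach_of_disjoint_cut {F : Set E} {S : Set V} (hF : ∀ f ∈ F, f ∉ cut ends S)
    {a b : V} (hab : Reach ends F a b) (ha : a ∈ S) : b ∈ S := by
  induction hab with
  | refl => exact ha
  | tail _ hstep ih =>
    obtain ⟨f, hfF, hf⟩ := hstep
    by_contra hb
    exact hF f hfF ((mem_cut_iff hf).2 (.inl ⟨ih, hb⟩))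

lemma card_cut_ne_one (hb : Bridgeless ends) (S : Set V) : #(cut ends S) ≠ 1 := by
  intro h
  obtain ⟨f, hf⟩ := card_eq_one.1 h
  obtain ⟨a, ha, b, hb', hab⟩ := mem_cut.1 (hf ▸ mem_singleton_self f)
  exact hb' (mem_of_reach_of_disjoint_cut (fun g (hg : g ≠ f) hgS => hg (by simpa [hf] using hgS))
    (hb f a b hab) ha)

open Classical in
lemma card_filter_mem_cut_le_two {ι : Type} [Fintype ι] {S : ι → Set V}
    (hS : Pairwise (Disjoint on S)) (f : E) : #{i | f ∈ cut ends (S i)} ≤ 2 := by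
  induction hf : ends f using Sym2.ind with | _ p q => ?_
  have hle_one : ∀ x, #{i | x ∈ S i} ≤ 1 := fun x =>
    card_le_one.2 fun i hi j hj => hS.eq (Set.not_disjoint_iff.2 ⟨x, by simp_all⟩)
  calc #{i | f ∈ cut ends (S i)} ≤ #(({i | p ∈ S i} : Finset ι) ∪ ({i | q ∈ S i} : Finset ι)) :=
        card_le_card fun i hi => by
          have := (mem_cut_iff hf).1 (mem_filter.1 hi).2
          simp only [mem_union, mem_filter, mem_univ, true_and]
          tauto
    _ ≤ 2 := (card_union_le _ _).trans (by linarith [hle_one p, hle_one q])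

open Classical in
lemma pairwiseDisjoint_erase_cut {ι : Type} {e : E} {u : Set V} {S : ι → Set V}
    (hS : Pairwise (Disjoint on S)) (hSu : ∀ i, Disjoint (S i) u)
    (hclosed : ∀ i, ∀ f ≠ e, ∀ a b, ends f = s(a, b) → a ∈ S i → b ∈ S i ∨ b ∈ u) :
    Pairwise (Disjoint on fun i => (cut ends (S i)).erase e) := by
  intro i j hij
  refine disjoint_left.2 fun f hfi hfj => hij ?_
  obtain ⟨hfe, hfi⟩ := mem_erase.1 hfi
  obtain ⟨a, ha, b, hb, hab⟩ := mem_cut.1 hfi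
  obtain ⟨a', ha', _, _, hab'⟩ := mem_cut.1 (mem_of_mem_erase hfj)
  have hbu : b ∈ u := (hclosed i f hfe a b hab ha).resolve_left hb
  rw [hab, Sym2.eq_iff] at hab'
  rcases hab' with ⟨rfl, -⟩ | ⟨-, rfl⟩
  · exact hS.eq (Set.not_disjoint_iff.2 ⟨_, ha, ha'⟩)
  · exact absurd hbu (Set.disjoint_left.1 (hSu j) ha')

variable [Fintype V]

open Classical in
lemma card_filter_mem_ends_modEq (hl : NoLoops ends) (S : Set V) (f : E) :
    #{v ∈ S.toFinset | v ∈ ends f} ≡ if f ∈ cut ends S then 1 else 0 [MOD 2] := by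
  induction hf : ends f using Sym2.ind with | _ a b => ?_
  have hab : a ≠ b := by simpa [hf] using hl f
  have : {v ∈ S.toFinset | v ∈ s(a, b)} = S.toFinset ∩ {a, b} := by ext; simp
  simp only [this, mem_cut_iff hf]
  by_cases ha : a ∈ S <;> by_cases hb : b ∈ S <;>
    simp [ha, hb, hab, inter_insert_of_mem, inter_insert_of_notMem, Nat.ModEq]

open Classical in
lemma card_cut_modEq_sum_degree (hl : NoLoops ends) (S : Set V) :
    #(cut ends S) ≡ ∑ v ∈ S.toFinset, degree ends v [MOD 2] := by
  have hswap : ∑ v ∈ S.toFinset, degree ends v = ∑ f, #{v ∈ S.toFinset | v ∈ ends f} :=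
    sum_card_bipartiteAbove_eq_sum_card_bipartiteBelow _
  rw [hswap]
  calc #(cut ends S) = ∑ f, if f ∈ cut ends S then 1 else 0 := by simp
    _ ≡ _ [MOD 2] := (Nat.ModEq.sum fun f _ => card_filter_mem_ends_modEq hl S f).symm

lemma odd_card_cut (hl : NoLoops ends) (hc : IsCubic ends) {S : Set V} (hS : Odd S.ncard) :
    Odd #(cut ends S) := by
  classical
  have hsum : ∑ v ∈ S.toFinset, degree ends v = 3 * S.ncard := by
    simp [degree_eq_of_isCubic hc, Set.ncard_eq_toFinset_card', mul_comm]
  have := card_cut_modEq_sum_degree hl S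
  rw [hsum] at this
  rw [Nat.odd_iff] at hS ⊢
  rw [this, Nat.mul_mod, hS]

lemma three_le_card_cut (hl : NoLoops ends) (hc : IsCubic ends) (hb : Bridgeless ends)
    {S : Set V} (hS : Odd S.ncard) : 3 ≤ #(cut ends S) := by
  obtain ⟨k, hk⟩ := odd_card_cut hl hc hS
  have := card_cut_ne_one hb S
  omega

open Classical in
lemma card_incident_le (hc : IsCubic ends) (u : Set V) :
    #{f | ∃ t ∈ u, t ∈ ends f} ≤ 3 * u.ncard :=
  calc #{f | ∃ t ∈ u, t ∈ ends f}
      ≤ #(u.toFinset.biUnion fun t => {f | t ∈ ends f}) :=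
        card_le_card fun f hf => by simpa using hf
    _ ≤ ∑ t ∈ u.toFinset, degree ends t := card_biUnion_le
    _ = 3 * u.ncard := by simp [degree_eq_of_isCubic hc, Set.ncard_eq_toFinset_card', mul_comm]

open Classical in
lemma three_mul_card_le {ι : Type} [Fintype ι] (hc : IsCubic ends) {e : E} {u : Set V}
    {S : ι → Set V} (hS : Pairwise (Disjoint on S)) (hSu : ∀ i, Disjoint (S i) u)
    (hclosed : ∀ i, ∀ f ≠ e, ∀ a b, ends f = s(a, b) → a ∈ S i → b ∈ S i ∨ b ∈ u)
    (h3 : ∀ i, 3 ≤ #(cut ends (S i))) :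
    3 * Nat.card ι ≤ 3 * u.ncard + 2 := by
  rw [Nat.card_eq_fintype_card]
  set D : ι → Finset E := fun i => (cut ends (S i)).erase e
  have hD : ∀ i, D i ⊆ ({f | ∃ t ∈ u, t ∈ ends f} : Finset E) := by
    intro i f hf
    obtain ⟨hfe, hf⟩ := mem_erase.1 hf
    obtain ⟨a, ha, b, hb, hab⟩ := mem_cut.1 hf
    exact mem_filter.2 ⟨mem_univ _, b, (hclosed i f hfe a b hab ha).resolve_left hb, by simp [hab]⟩
  have hDsum : ∑ i, #(D i) ≤ 3 * u.ncard := by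
    rw [← card_biUnion fun i _ j _ hij => pairwiseDisjoint_erase_cut hS hSu hclosed hij]
    exact (card_le_card (biUnion_subset.2 fun i _ => hD i)).trans (card_incident_le hc u)
  calc 3 * Fintype.card ι ≤ ∑ i, #(cut ends (S i)) := by
        simpa [mul_comm] using sum_le_sum fun i (_ : i ∈ univ) => h3 i
    _ = ∑ i, (#(D i) + if e ∈ cut ends (S i) then 1 else 0) := by
        refine sum_congr rfl fun i _ => ?_
        split_ifs with he
        · exact (card_erase_add_one he).symm
        · simp [D, erase_eq_of_notMem he]
    _ ≤ 3 * u.ncard + 2 := by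
        rw [sum_add_distrib, sum_boole]
        exact add_le_add hDsum (card_filter_mem_cut_le_two hS e)

open SimpleGraph in
lemma not_isTutteViolator (hl : NoLoops ends) (hc : IsCubic ends) (hb : Bridgeless ends)
    (e : E) (u : Set V) : ¬ (fromEdgeSet (ends '' {f | f ≠ e})).IsTutteViolator u := by
  classical
  rw [IsTutteViolator, not_lt, ← Nat.card_coe_set_eq]
  set G := fromEdgeSet (ends '' {f | f ≠ e})
  set H := ((⊤ : G.Subgraph).deleteVerts u).coe
  let S : H.oddComponents → Set V := fun c => Subtype.val '' (c : H.ConnectedComponent).supp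
  have hS : Pairwise (Disjoint on S) := fun c c' hcc' =>
    (Set.disjoint_image_iff Subtype.val_injective).2
      (H.pairwise_disjoint_supp_connectedComponent (Subtype.coe_ne_coe.2 hcc'))
  have hSu : ∀ c, Disjoint (S c) u := fun c =>
    Set.disjoint_left.2 (by rintro _ ⟨x, -, rfl⟩; simpa using x.2)
  have hclosed : ∀ c, ∀ f ≠ e, ∀ a b, ends f = s(a, b) → a ∈ S c → b ∈ S c ∨ b ∈ u := by
    rintro c f hfe _ b hab ⟨a, ha, rfl⟩
    refine or_iff_not_imp_right.2 fun hbu => ⟨⟨b, by simpa using hbu⟩, ?_, rfl⟩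
    refine ((c : H.ConnectedComponent).mem_supp_congr_adj ?_).1 ha
    have hne : (a : V) ≠ b := fun h => hl f (by simp [hab, h])
    simpa [H, G] using ⟨by simpa using a.2, hbu, ⟨f, hfe, hab⟩, hne⟩
  have h3 : ∀ c, 3 ≤ #(cut ends (S c)) := fun c => three_le_card_cut hl hc hb <| by
    rw [Set.ncard_image_of_injective _ Subtype.val_injective]
    exact c.2
  have := three_mul_card_le hc hS hSu hclosed h3
  omega

end Mg

theorem stmt1 {V E : Type} [Fintype V] [Fintype E] (ends : E → Sym2 V)
    (hl : Mg.NoLoops ends) (hc : Mg.IsCubic ends) (hb : Mg.Bridgeless ends) :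
    ∀ e : E, ∃ M : Set E, Mg.IsPerfectMatching ends M ∧ e ∉ M := by
  intro e
  obtain ⟨M, hM⟩ := SimpleGraph.tutte.2 (Mg.not_isTutteViolator hl hc hb e)
  obtain ⟨N, hNF, hN⟩ := Mg.exists_isPerfectMatching_of_fromEdgeSet hM
  exact ⟨N, hN, fun he => hNF he rfl⟩
end

section
/- Let G be a cubic graph of girth at least five such that every path of length two in G is contained in at least two distinct 5-cycles. If G is connected, then G has exactly ten vertices. -/
/-- A 5-cycle in a simple graph, given by an injective map from `ZMod 5`. -/
def IsC5 {V : Type} (G : SimpleGraph V) (c : ZMod 5 → V) : Prop :=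
  Function.Injective c ∧ ∀ i, G.Adj (c i) (c (i + 1))

/-- The edge set of a 5-cycle. -/
def cEdges {V : Type} (c : ZMod 5 → V) : Set (Sym2 V) :=
  Set.range fun i : ZMod 5 => s(c i, c (i + 1))

/-!
Fix a vertex `v`. Since the girth is at least five, the ball of radius two around `v` has
exactly `1 + 3 + 3 * 2 = 10` vertices. It is closed under adjacency: a vertex `x` reached by a
path `v a x` lies on two distinct 5-cycles `v a x p q` and `v a x p' q'`. If `p = p'` then
`q = q'`, because `v` and `p` have at most one common neighbour, and the cycles would coincide;
so the three neighbours of `x` are `a`, `p` and `p'`, all within distance two of `v`. By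
connectivity the ball is the whole vertex set.
-/

open Finset SimpleGraph

namespace SimpleGraph

variable {V : Type} {G : SimpleGraph V}

lemma Reachable.mem_of_forall_adj_mem {s : Set V} (hs : ∀ x ∈ s, ∀ y, G.Adj x y → y ∈ s)
    {u v : V} (huv : G.Reachable u v) (hu : u ∈ s) : v ∈ s := by
  rw [reachable_iff_reflTransGen] at huv
  induction huv with
  | refl => exact hu
  | tail _ hyz ih => exact hs _ ih _ hyz

lemma not_adj_of_adj_of_adj (hg : 5 ≤ G.girth) {a b c : V} (hab : G.Adj a b) (hbc : G.Adj b c) :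
    ¬ G.Adj c a := fun hca => by
  have := hg.trans <| G.girth_le_length (w := .cons hab (.cons hbc (.cons hca .nil))) <| by
    simp [Walk.isCycle_def, hab.ne, hbc.ne, hca.ne, hab.ne', hca.ne']
  simp at this

lemma eq_of_adj_of_adj_of_adj_of_adj (hg : 5 ≤ G.girth) {a b c d : V} (hab : G.Adj a b)
    (hbc : G.Adj b c) (had : G.Adj a d) (hdc : G.Adj d c) (hac : a ≠ c) : b = d := by
  by_contra hbd
  have := hg.trans <| G.girth_le_length
    (w := .cons hab (.cons hbc (.cons hdc.symm (.cons had.symm .nil)))) <| by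
    simp [Walk.isCycle_def, hab.ne, hbc.ne, had.ne, hab.ne', hdc.ne', had.ne', hac, hbd,
      Ne.symm hac]
  simp at this

def twoBall [DecidableEq V] (G : SimpleGraph V) [G.LocallyFinite] (v : V) : Finset V :=
  insert v <| G.neighborFinset v ∪
    (G.neighborFinset v).biUnion fun a => (G.neighborFinset a).erase v

section TwoBall

variable [DecidableEq V] [G.LocallyFinite]

lemma mem_twoBall {v y : V} :
    y ∈ G.twoBall v ↔ y = v ∨ G.Adj v y ∨ ∃ a, G.Adj v a ∧ G.Adj a y := by
  by_cases hyv : y = v <;> simp [twoBall, hyv]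

lemma card_twoBall {d : ℕ} (hd : G.IsRegularOfDegree d) (hg : 5 ≤ G.girth) (v : V) :
    #(G.twoBall v) = d ^ 2 + 1 := by
  have hv : v ∉ G.neighborFinset v ∪
      (G.neighborFinset v).biUnion fun a => (G.neighborFinset a).erase v := by
    simp
  have hdisj : Disjoint (G.neighborFinset v)
      ((G.neighborFinset v).biUnion fun a => (G.neighborFinset a).erase v) := by
    simp only [Finset.disjoint_left, mem_biUnion, mem_neighborFinset, mem_erase, not_exists,
      not_and]
    exact fun z hvz a hva _ haz => not_adj_of_adj_of_adj hg hva haz hvz.symm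
  have hpair : (G.neighborFinset v : Set V).PairwiseDisjoint
      fun a => (G.neighborFinset a).erase v := by
    intro a hva b hvb hab
    simp only [Function.onFun, Finset.disjoint_left, mem_erase, mem_neighborFinset]
    exact fun z ⟨hzv, haz⟩ ⟨_, hbz⟩ => hab <| eq_of_adj_of_adj_of_adj_of_adj hg
      (by simpa using hva) haz (by simpa using hvb) hbz (Ne.symm hzv)
  have hcard : ∀ a ∈ G.neighborFinset v, #((G.neighborFinset a).erase v) = d - 1 :=
    fun a hva => by
      rw [card_erase_of_mem (by simpa [adj_comm] using hva), card_neighborFinset_eq_degree, hd a]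
  rw [twoBall, card_insert_of_notMem hv, card_union_of_disjoint hdisj, card_biUnion hpair,
    sum_congr rfl hcard, sum_const, card_neighborFinset_eq_degree, hd v, smul_eq_mul]
  rcases d with _ | d
  · rfl
  · rw [Nat.add_sub_cancel]
    ring

end TwoBall

end SimpleGraph

section FiveCycles

variable {V : Type} {G : SimpleGraph V}

lemma cEdges_comp_add (c : ZMod 5 → V) (k : ZMod 5) : cEdges (fun i => c (i + k)) = cEdges c := by
  ext e
  simp only [cEdges, Set.mem_range]
  constructor
  · rintro ⟨i, rfl⟩
    exact ⟨i + k, by rw [add_right_comm]⟩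
  · rintro ⟨i, rfl⟩
    exact ⟨i - k, by simp [sub_add_cancel, sub_add_eq_add_sub]⟩

lemma cEdges_comp_sub (c : ZMod 5 → V) (k : ZMod 5) : cEdges (fun i => c (k - i)) = cEdges c := by
  ext e
  simp only [cEdges, Set.mem_range]
  constructor
  · rintro ⟨i, rfl⟩
    exact ⟨k - i - 1, by rw [Sym2.eq_swap]; ring_nf⟩
  · rintro ⟨i, rfl⟩
    exact ⟨k - i - 1, by rw [Sym2.eq_swap]; ring_nf⟩

namespace IsC5

variable {c : ZMod 5 → V}

lemma comp_add (hc : IsC5 G c) (k : ZMod 5) : IsC5 G fun i => c (i + k) :=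
  ⟨hc.1.comp (add_left_injective k), fun i => by simpa only [add_right_comm] using hc.2 (i + k)⟩

lemma comp_sub (hc : IsC5 G c) (k : ZMod 5) : IsC5 G fun i => c (k - i) :=
  ⟨hc.1.comp sub_right_injective, fun i => by
    simpa only [show k - (i + 1) + 1 = k - i by ring] using (hc.2 (k - (i + 1))).symm⟩

lemma eq_of_mem_cEdges (hc : IsC5 G c) {i : ZMod 5} {y : V} (h : s(c i, y) ∈ cEdges c) :
    y = c (i + 1) ∨ y = c (i - 1) := by
  obtain ⟨j, hj⟩ := h
  rcases Sym2.eq_iff.mp hj with ⟨hji, rfl⟩ | ⟨rfl, hji⟩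
  · exact Or.inl (by rw [hc.1 hji])
  · exact Or.inr (by rw [← hc.1 hji, add_sub_cancel_right])

lemma exists_normalize (hc : IsC5 G c) {v a x : V} (hva : s(v, a) ∈ cEdges c)
    (hax : s(a, x) ∈ cEdges c) (hvx : v ≠ x) :
    ∃ d, IsC5 G d ∧ cEdges d = cEdges c ∧ d 0 = v ∧ d 1 = a ∧ d 2 = x := by
  obtain ⟨i, rfl⟩ : ∃ i, c i = a := by
    obtain ⟨j, hj⟩ := hva
    rcases Sym2.eq_iff.mp hj with ⟨-, h⟩ | ⟨h, -⟩ <;> exact ⟨_, h⟩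
  rw [Sym2.eq_swap] at hva
  rcases hc.eq_of_mem_cEdges hva with rfl | rfl <;>
    rcases hc.eq_of_mem_cEdges hax with rfl | rfl <;> try exact absurd rfl hvx
  · exact ⟨_, hc.comp_sub (i + 1), cEdges_comp_sub c _, by ring_nf, by ring_nf, by ring_nf⟩
  · exact ⟨_, hc.comp_add (i - 1), cEdges_comp_add c _, by ring_nf, by ring_nf, by ring_nf⟩

end IsC5

def PathsInTwoC5 (G : SimpleGraph V) : Prop :=
  ∀ u v w : V, G.Adj u v → G.Adj v w → u ≠ w →
    ∃ c c' : ZMod 5 → V, IsC5 G c ∧ IsC5 G c' ∧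
      s(u, v) ∈ cEdges c ∧ s(v, w) ∈ cEdges c ∧
      s(u, v) ∈ cEdges c' ∧ s(v, w) ∈ cEdges c' ∧
      cEdges c ≠ cEdges c'

lemma PathsInTwoC5.exists_ne (h : PathsInTwoC5 G) {v a x : V} (hva : G.Adj v a) (hax : G.Adj a x)
    (hvx : v ≠ x) :
    ∃ d d' : ZMod 5 → V, IsC5 G d ∧ IsC5 G d' ∧ d ≠ d' ∧
      d 0 = v ∧ d 1 = a ∧ d 2 = x ∧ d' 0 = v ∧ d' 1 = a ∧ d' 2 = x := by
  obtain ⟨c, c', hc, hc', hva, hax, hva', hax', hne⟩ := h v a x hva hax hvx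
  obtain ⟨d, hd, hdc, hd0, hd1, hd2⟩ := hc.exists_normalize hva hax hvx
  obtain ⟨d', hd', hdc', hd0', hd1', hd2'⟩ := hc'.exists_normalize hva' hax' hvx
  exact ⟨d, d', hd, hd', by rintro rfl; exact hne (hdc.symm.trans hdc'),
    hd0, hd1, hd2, hd0', hd1', hd2'⟩

lemma IsC5.apply_three_ne (hg : 5 ≤ G.girth) {d d' : ZMod 5 → V} (hd : IsC5 G d)
    (hd' : IsC5 G d') (hne : d ≠ d') (h0 : d 0 = d' 0) (h1 : d 1 = d' 1) (h2 : d 2 = d' 2) :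
    d 3 ≠ d' 3 := by
  intro h3
  have h4 : d 4 = d' 4 := eq_of_adj_of_adj_of_adj_of_adj hg (hd.2 3) (hd.2 4)
    (h3 ▸ hd'.2 3) (h0 ▸ hd'.2 4) (hd.1.ne (by decide))
  exact hne (funext fun i => by fin_cases i <;> assumption)

lemma IsC5.neighborFinset_eq [DecidableEq V] [G.LocallyFinite] (hcubic : G.IsRegularOfDegree 3)
    (hg : 5 ≤ G.girth) {d d' : ZMod 5 → V} (hd : IsC5 G d) (hd' : IsC5 G d') (hne : d ≠ d')
    (h0 : d 0 = d' 0) (h1 : d 1 = d' 1) (h2 : d 2 = d' 2) :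
    G.neighborFinset (d 2) = {d 1, d 3, d' 3} := by
  have h13 : d 1 ≠ d 3 := hd.1.ne (by decide)
  have h13' : d 1 ≠ d' 3 := h1 ▸ hd'.1.ne (by decide)
  have h33 : d 3 ≠ d' 3 := hd.apply_three_ne hg hd' hne h0 h1 h2
  refine (eq_of_subset_of_card_le (fun z hz => ?_) ?_).symm
  · simp only [mem_insert, mem_singleton] at hz
    rw [mem_neighborFinset]
    rcases hz with rfl | rfl | rfl
    exacts [(hd.2 1).symm, hd.2 2, h2 ▸ hd'.2 2]
  · rw [card_neighborFinset_eq_degree, hcubic, card_insert_of_notMem (by simp [h13, h13']),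
      card_pair h33]

lemma PathsInTwoC5.mem_twoBall_of_adj [DecidableEq V] [G.LocallyFinite] (h : PathsInTwoC5 G)
    (hcubic : G.IsRegularOfDegree 3) (hg : 5 ≤ G.girth)
    {v y z : V} (hy : y ∈ G.twoBall v) (hyz : G.Adj y z) : z ∈ G.twoBall v := by
  rw [mem_twoBall] at hy ⊢
  rcases hy with rfl | hvy | ⟨a, hva, hay⟩
  · exact Or.inr (Or.inl hyz)
  · exact Or.inr (Or.inr ⟨y, hvy, hyz⟩)
  obtain rfl | hvy := eq_or_ne v y
  · exact Or.inr (Or.inl hyz)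
  obtain ⟨d, d', hd, hd', hne, rfl, rfl, rfl, h0, h1, h2⟩ := h.exists_ne hva hay hvy
  have hz : z ∈ G.neighborFinset (d 2) := by simpa using hyz
  rw [hd.neighborFinset_eq hcubic hg hd' hne h0.symm h1.symm h2.symm] at hz
  simp only [mem_insert, mem_singleton] at hz
  rcases hz with rfl | rfl | rfl
  · exact Or.inr (Or.inl hva)
  · exact Or.inr (Or.inr ⟨d 4, (hd.2 4).symm, (hd.2 3).symm⟩)
  · exact Or.inr (Or.inr ⟨d' 4, h0 ▸ (hd'.2 4).symm, (hd'.2 3).symm⟩)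

end FiveCycles

theorem stmt15 {V : Type} [Fintype V] (G : SimpleGraph V) [DecidableRel G.Adj]
    (hcubic : G.IsRegularOfDegree 3) (hgirth : 5 ≤ G.girth)
    (h2 : ∀ u v w : V, G.Adj u v → G.Adj v w → u ≠ w →
      ∃ c c' : ZMod 5 → V, IsC5 G c ∧ IsC5 G c' ∧
        s(u, v) ∈ cEdges c ∧ s(v, w) ∈ cEdges c ∧
        s(u, v) ∈ cEdges c' ∧ s(v, w) ∈ cEdges c' ∧
        cEdges c ≠ cEdges c')
    (hconn : G.Connected) : Fintype.card V = 10 := by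
  classical
  obtain ⟨v⟩ := hconn.nonempty
  have hball : G.twoBall v = univ := eq_univ_of_forall fun y =>
    (hconn v y).mem_of_forall_adj_mem (s := G.twoBall v)
      (fun _ hx _ hxy => PathsInTwoC5.mem_twoBall_of_adj h2 hcubic hgirth hx hxy)
      (mem_twoBall.mpr (Or.inl rfl))
  calc Fintype.card V = #(G.twoBall v) := by rw [hball, card_univ]
    _ = 10 := G.card_twoBall hcubic hgirth v
end
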